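/- Let d ≥ 1, r > 0, and let V̂ : ℤ^d → ℝ satisfy V̂(k) = 0 for |k| > r, V̂(−k) = V̂(k), and V̂(0) = 0; write ‖V̂‖₁ = (2π)^{−d}·∑_{k∈ℤ^d}|V̂(k)|. There exists a constant C > 0, depending only on d and ‖V̂‖₁, such that whenever λ > 0 satisfies λ·‖V̂‖₁ ≤ 1/2, then for every summable f : ℤ^d → ℝ and every t > 0: sup_{p∈ℤ^d} |Q_t[f](p) − t·𝒬[f](p)| ≤ C·t·(1/t² + (λt)²)·(sup_p|1 − f(p)|)²·((2π)^{−d}·∑_p|f(p)|)·(sup_p|f(p)|). -/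

import Mathlib

open Real

/-- The Euclidean norm of a lattice point in `ℤ^d`. -/
noncomputable def zNorm {d : ℕ} (p : Fin d → ℤ) : ℝ := Real.sqrt (∑ i, ((p i : ℝ)) ^ 2)

/-- The indicator `χ` of the Fermi ball of radius `p_F`. -/
noncomputable def chi {d : ℕ} (pF : ℝ) (p : Fin d → ℤ) : ℝ := if zNorm p ≤ pF then 1 else 0

/-- The indicator `χ^⊥ = 1 − χ` of the complement of the Fermi ball. -/
noncomputable def chiP {d : ℕ} (pF : ℝ) (p : Fin d → ℤ) : ℝ := 1 - chi pF p

/-- The profile of the mollified delta function: `δ₁(E) = (2/π)·sin²(E/2)/E²` for `E ≠ 0`,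
extended by its limit `1/(2π)` at `E = 0`. -/
noncomputable def delta1 (E : ℝ) : ℝ :=
  if E = 0 then 1 / (2 * π) else (2 / π) * (Real.sin (E / 2)) ^ 2 / E ^ 2

/-- The mollified delta function `δ_t(E) = t·δ₁(t·E)`. -/
noncomputable def deltaT (t E : ℝ) : ℝ := t * delta1 (t * E)

/-- The normalized convolution `(V̂⋆g)(q) = (2π)^{−d}·∑_k V̂(k)·g(q−k)`. -/
noncomputable def conv {d : ℕ} (Vh g : (Fin d → ℤ) → ℝ) (q : Fin d → ℤ) : ℝ :=
  ((2 * π) ^ d)⁻¹ * ∑' k : Fin d → ℤ, Vh k * g (q - k)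

/-- The `ℓ¹`-norm `‖V̂‖₁ = (2π)^{−d}·∑_k |V̂(k)|`. -/
noncomputable def VhatL1 {d : ℕ} (Vh : (Fin d → ℤ) → ℝ) : ℝ :=
  ((2 * π) ^ d)⁻¹ * ∑' k : Fin d → ℤ, |Vh k|

/-- The dispersion relation
`E_q = χ^⊥(q)·(|q|²/2 − (λ/2)·(V̂⋆χ)(q)) − χ(q)·(|q|²/2 + (λ/2)·(V̂⋆χ^⊥)(q))`. -/
noncomputable def disp {d : ℕ} (pF lam : ℝ) (Vh : (Fin d → ℤ) → ℝ) (q : Fin d → ℤ) : ℝ :=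
  chiP pF q * ((zNorm q) ^ 2 / 2 - (lam / 2) * conv Vh (chi pF) q)
    - chi pF q * ((zNorm q) ^ 2 / 2 + (lam / 2) * conv Vh (chiP pF) q)

/-- The collision kernel `σ(p₁,p₂,p₃,p₄)`. -/
noncomputable def collisionKernel {d : ℕ} (pF : ℝ) (Vh : (Fin d → ℤ) → ℝ)
    (p₁ p₂ p₃ p₄ : Fin d → ℤ) : ℝ :=
  (if p₁ + p₂ = p₃ + p₄ then 1 else 0) *
      (chi pF p₁ * chi pF p₂ * chi pF p₃ * chi pF p₄
        + chiP pF p₁ * chiP pF p₂ * chiP pF p₃ * chiP pF p₄) *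
      (Vh (p₁ - p₄) - Vh (p₁ - p₃)) ^ 2
    + 2 * (if p₁ - p₂ = p₃ - p₄ then 1 else 0) *
      (chi pF p₁ * chi pF p₃ * chiP pF p₂ * chiP pF p₄
        + chiP pF p₁ * chiP pF p₃ * chi pF p₂ * chi pF p₄) *
      (Vh (p₁ - p₃)) ^ 2

/-- The signed free dispersion `e(q) = (χ^⊥(q) − χ(q))·|q|²/2`. -/
noncomputable def freeDisp {d : ℕ} (pF : ℝ) (q : Fin d → ℤ) : ℝ :=
  (chiP pF q - chi pF q) * (zNorm q) ^ 2 / 2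

/-- The energy-mollified collision operator `Q_t`. -/
noncomputable def Qt {d : ℕ} (pF lam t : ℝ) (Vh f : (Fin d → ℤ) → ℝ)
    (p : Fin d → ℤ) : ℝ :=
  4 * π * ((2 * π) ^ (3 * d))⁻¹ *
    ∑' (p₂ : Fin d → ℤ) (p₃ : Fin d → ℤ) (p₄ : Fin d → ℤ),
      collisionKernel pF Vh p p₂ p₃ p₄ *
        deltaT t (disp pF lam Vh p + disp pF lam Vh p₂
          - disp pF lam Vh p₃ - disp pF lam Vh p₄) *
        (f p₃ * f p₄ * (1 - f p) * (1 - f p₂) - f p * f p₂ * (1 - f p₃) * (1 - f p₄))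

/-- The limiting quantum Boltzmann collision operator `𝒬`. -/
noncomputable def Qlim {d : ℕ} (pF : ℝ) (Vh f : (Fin d → ℤ) → ℝ) (p : Fin d → ℤ) : ℝ :=
  4 * π * ((2 * π) ^ (3 * d))⁻¹ *
    ∑' (p₂ : Fin d → ℤ) (p₃ : Fin d → ℤ) (p₄ : Fin d → ℤ),
      collisionKernel pF Vh p p₂ p₃ p₄ * (1 / (2 * π)) *
        (if freeDisp pF p + freeDisp pF p₂ - freeDisp pF p₃ - freeDisp pF p₄ = 0
          then 1 else 0) *
        (f p₃ * f p₄ * (1 - f p) * (1 - f p₂) - f p * f p₂ * (1 - f p₃) * (1 - f p₄))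

/-
The two collision operators are sums of `σ · w · F` over the gain–loss term `F`, with weights
`δ_t(E_p + E_{p₂} − E_{p₃} − E_{p₄})` and `t/(2π) · 𝟙[e_p + e_{p₂} − e_{p₃} − e_{p₄} = 0]`.
The free energy gap lies in `ℤ/2` and the interaction shifts it by at most `2λ‖V̂‖₁`, so the two
weights differ by `O(t (1/t² + (λt)²))`: on shell by the expansion `δ₁(E) = 1/(2π) + O(E²)`,
off shell by the decay `δ₁(E) ≲ E⁻²`. Momentum conservation leaves two values of `p₄`, and
once `|F|` is bounded by `(sup|1−f|)² · sup|f|` times `|f|` at a momentum independent of the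
argument of `V̂`, each remaining double sum factors as `‖V̂‖₂² · ‖f‖₁ ≤ ((2π)^d ‖V̂‖₁)² ‖f‖₁`.
-/

lemma hasSum_mul_comp_equiv {X X' Y : Type*} {u : X → ℝ} {v : X' → ℝ} (hu : Summable u)
    (hv : Summable v) (hu0 : 0 ≤ u) (hv0 : 0 ≤ v) (e : Y ≃ X × X') :
    HasSum (fun y => u (e y).1 * v (e y).2) ((∑' x, u x) * ∑' x, v x) := by
  have h : HasSum (fun z : X × X' => u z.1 * v z.2) ((∑' x, u x) * ∑' x, v x) :=
    hu.hasSum.mul hv.hasSum (hu.mul_of_nonneg hv hu0 hv0)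
  exact e.hasSum_iff.mpr h

lemma hasSum_ite_eq_graph {α β M : Type*} [AddCommMonoid M] [TopologicalSpace M]
    [DecidableEq β] {m : α → M} {s : M} (u : α → β) (h : HasSum m s) :
    HasSum (fun q : α × β => if q.2 = u q.1 then m q.1 else 0) s := by
  have hinj : Function.Injective fun a => (a, u a) := fun a b hab => congrArg Prod.fst hab
  exact (hinj.hasSum_iff fun q hq => if_neg fun hq' => hq ⟨q.1, Prod.ext rfl hq'.symm⟩).mp
    (h.congr_fun fun a => if_pos rfl)

lemma tsum_tsum_tsum_eq_tsum_prod {α β γ E : Type*} [NormedAddCommGroup E] [CompleteSpace E]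
    {f : α → β → γ → E} (hf : Summable fun q : (α × β) × γ => f q.1.1 q.1.2 q.2) :
    ∑' x, ∑' y, ∑' z, f x y z = ∑' q : (α × β) × γ, f q.1.1 q.1.2 q.2 := by
  rw [hf.tsum_prod, hf.prod.tsum_prod]

lemma abs_le_zNorm {d : ℕ} (k : Fin d → ℤ) (i : Fin d) : |(k i : ℝ)| ≤ zNorm k :=
  Real.abs_le_sqrt (Finset.single_le_sum (f := fun j => ((k j : ℝ)) ^ 2)
    (fun _ _ => sq_nonneg _) (Finset.mem_univ i))

lemma summable_of_eq_zero_of_lt_zNorm {d : ℕ} {W : (Fin d → ℤ) → ℝ} {r : ℝ}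
    (h : ∀ k, r < zNorm k → W k = 0) : Summable W := by
  refine summable_of_hasFiniteSupport <|
    (isCompact_closedBall (0 : Fin d → ℤ) r).finite_of_discrete.subset fun k hk => ?_
  have hkr : zNorm k ≤ r := not_lt.mp fun hlt => hk (h k hlt)
  rw [mem_closedBall_zero_iff, pi_norm_le_iff_of_nonneg ((Real.sqrt_nonneg _).trans hkr)]
  intro i
  rw [Int.norm_eq_abs]
  exact (abs_le_zNorm k i).trans hkr

lemma tsum_sq_le_sq_tsum_abs {ι : Type*} {V : ι → ℝ} (hV : Summable V) :
    ∑' k, V k ^ 2 ≤ (∑' k, |V k|) ^ 2 := by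
  have hle : ∀ k, V k ^ 2 ≤ |V k| * ∑' j, |V j| := fun k => by
    rw [← sq_abs, sq]
    exact mul_le_mul_of_nonneg_left (hV.abs.le_tsum k fun _ _ => abs_nonneg _) (abs_nonneg _)
  calc ∑' k, V k ^ 2 ≤ ∑' k, |V k| * ∑' j, |V j| :=
        Summable.tsum_le_tsum hle
          ((hV.abs.mul_right _).of_nonneg_of_le (fun _ => sq_nonneg _) hle) (hV.abs.mul_right _)
    _ = (∑' k, |V k|) ^ 2 := by rw [tsum_mul_right, sq]

lemma Summable.abs_le_iSup_abs {ι : Type*} {f : ι → ℝ} (hf : Summable f) (q : ι) :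
    |f q| ≤ ⨆ q, |f q| :=
  le_ciSup ⟨_, Set.forall_mem_range.2 fun q => hf.abs.le_tsum q fun _ _ => abs_nonneg _⟩ q

lemma Summable.abs_one_sub_le_iSup {ι : Type*} {f : ι → ℝ} (hf : Summable f) (q : ι) :
    |1 - f q| ≤ ⨆ q, |1 - f q| :=
  le_ciSup ⟨1 + ∑' q, |f q|, Set.forall_mem_range.2 fun q => (abs_sub _ _).trans <| by
    rw [abs_one]; linarith [hf.abs.le_tsum q fun _ _ => abs_nonneg _]⟩ q

lemma delta1_nonneg (E : ℝ) : 0 ≤ delta1 E := by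
  unfold delta1; split_ifs <;> positivity

lemma delta1_le (E : ℝ) : delta1 E ≤ 1 / (2 * π) := by
  unfold delta1
  split_ifs with hE
  · rfl
  · rw [div_le_iff₀ (by positivity)]
    calc 2 / π * Real.sin (E / 2) ^ 2 ≤ 2 / π * (E / 2) ^ 2 :=
          mul_le_mul_of_nonneg_left Real.sin_sq_le_sq (by positivity)
      _ = 1 / (2 * π) * E ^ 2 := by field_simp

lemma delta1_le_div_sq {E : ℝ} (hE : E ≠ 0) : delta1 E ≤ 2 / π / E ^ 2 := by
  rw [delta1, if_neg hE]
  gcongr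
  exact mul_le_of_le_one_right (by positivity) (Real.sin_sq_le_one _)

lemma sq_sub_sin_sq_le (x : ℝ) : x ^ 2 - Real.sin x ^ 2 ≤ x ^ 4 / 3 := by
  wlog hx : 0 < x generalizing x
  · rcases (not_lt.mp hx).eq_or_lt with rfl | hneg
    · simp
    · simpa [Real.sin_neg, Even.neg_pow (by decide : Even 2), Even.neg_pow (by decide : Even 4)]
        using this (-x) (neg_pos.mpr hneg)
  have hsin := Real.sin_lt hx
  have hcube := Real.sin_gt_sub_cube hx
  nlinarith [pow_pos hx 3]

lemma abs_delta1_sub_le (E : ℝ) : |delta1 E - 1 / (2 * π)| ≤ E ^ 2 := by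
  rcases eq_or_ne E 0 with rfl | hE
  · simp [delta1]
  have hgap : delta1 E - 1 / (2 * π) = -(2 / π * ((E / 2) ^ 2 - Real.sin (E / 2) ^ 2) / E ^ 2) := by
    rw [delta1, if_neg hE]; field_simp; ring
  have hnonneg : 0 ≤ (E / 2) ^ 2 - Real.sin (E / 2) ^ 2 := sub_nonneg.mpr Real.sin_sq_le_sq
  rw [hgap, abs_neg, abs_of_nonneg (by positivity), div_le_iff₀ (by positivity)]
  have hπ : 2 / π ≤ 1 := by rw [div_le_one Real.pi_pos]; linarith [Real.pi_gt_three]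
  calc 2 / π * ((E / 2) ^ 2 - Real.sin (E / 2) ^ 2) ≤ 1 * ((E / 2) ^ 4 / 3) := by
        gcongr
        exact sq_sub_sin_sq_le _
    _ ≤ E ^ 2 * E ^ 2 := by nlinarith [pow_two_nonneg (E ^ 2)]

lemma deltaT_nonneg {t : ℝ} (ht : 0 ≤ t) (E : ℝ) : 0 ≤ deltaT t E :=
  mul_nonneg ht (delta1_nonneg _)

lemma deltaT_le {t : ℝ} (ht : 0 ≤ t) (E : ℝ) : deltaT t E ≤ t / (2 * π) :=
  calc deltaT t E ≤ t * (1 / (2 * π)) := mul_le_mul_of_nonneg_left (delta1_le _) ht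
    _ = t / (2 * π) := by ring

lemma abs_deltaT_sub_le {t : ℝ} (ht : 0 ≤ t) (E : ℝ) :
    |deltaT t E - t / (2 * π)| ≤ t ^ 3 * E ^ 2 := by
  rw [deltaT, div_eq_mul_one_div t, ← mul_sub, abs_mul, abs_of_nonneg ht]
  calc t * |delta1 (t * E) - 1 / (2 * π)| ≤ t * (t * E) ^ 2 := by
        gcongr; exact abs_delta1_sub_le _
    _ = t ^ 3 * E ^ 2 := by ring

lemma deltaT_le_of_le_abs {t E : ℝ} (ht : 0 < t) (hE : 1 / 4 ≤ |E|) : deltaT t E ≤ 11 / t := by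
  have hE0 : E ≠ 0 := by rintro rfl; norm_num at hE
  have hsq : t ^ 2 / 16 ≤ (t * E) ^ 2 := by
    have : 1 / 16 ≤ |E| ^ 2 := by nlinarith
    rw [mul_pow, ← sq_abs E]; nlinarith [mul_le_mul_of_nonneg_left this (sq_nonneg t)]
  calc deltaT t E ≤ t * (2 / π / (t * E) ^ 2) :=
        mul_le_mul_of_nonneg_left (delta1_le_div_sq (mul_ne_zero ht.ne' hE0)) ht.le
    _ ≤ t * (2 / π / (t ^ 2 / 16)) := by gcongr
    _ = 32 / π / t := by field_simp; ring
    _ ≤ 11 / t := by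
        gcongr
        rw [div_le_iff₀ Real.pi_pos]; linarith [Real.pi_gt_three]

lemma two_mul_le_inv_sq_add_sq {t : ℝ} (ht : 0 < t) (lam : ℝ) :
    2 * lam ≤ 1 / t ^ 2 + (lam * t) ^ 2 := by
  have h := two_mul_le_add_sq (1 / t) (lam * t)
  rwa [div_pow, one_pow, show 2 * (1 / t) * (lam * t) = 2 * lam by field_simp] at h

lemma abs_deltaT_sub_le_of_abs_le {t lam N N1 E : ℝ} (ht : 0 < t) (hN : 0 ≤ N) (hNN1 : N ≤ N1)
    (hE : |E| ≤ 2 * (lam * N)) :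
    |deltaT t E - t / (2 * π)| ≤ 11 * (1 + N1 ^ 2) * (t * (1 / t ^ 2 + (lam * t) ^ 2)) := by
  have hEsq : E ^ 2 ≤ (2 * (lam * N)) ^ 2 := by
    rw [← sq_abs]; exact pow_le_pow_left₀ (abs_nonneg E) hE 2
  calc |deltaT t E - t / (2 * π)| ≤ t ^ 3 * E ^ 2 := abs_deltaT_sub_le ht.le E
    _ ≤ t ^ 3 * (2 * (lam * N)) ^ 2 := by gcongr
    _ = 4 * N ^ 2 * (t * (lam * t) ^ 2) := by ring
    _ ≤ 11 * (1 + N1 ^ 2) * (t * (1 / t ^ 2 + (lam * t) ^ 2)) := by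
        gcongr ?_ * (t * ?_)
        · nlinarith [mul_le_mul hNN1 hNN1 hN (hN.trans hNN1)]
        · nlinarith [one_div_pos.mpr (pow_pos ht 2)]

/-- Either `|E| ≥ 1/4` and `δ₁` has decayed, or the interaction is strong, `8 λ N₁ ≥ 1`, and then
`1/t² + (λt)² ≥ 2λ` is bounded below. -/
lemma deltaT_le_of_half_le_abs {t lam N N1 E e : ℝ} (ht : 0 < t) (hlam : 0 ≤ lam) (hN : 0 ≤ N)
    (hNN1 : N ≤ N1) (he : 1 / 2 ≤ |e|) (hEe : |E - e| ≤ 2 * (lam * N)) :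
    deltaT t E ≤ 11 * (1 + N1 ^ 2) * (t * (1 / t ^ 2 + (lam * t) ^ 2)) := by
  have hN1 : 0 ≤ N1 := hN.trans hNN1
  by_cases hE : 1 / 4 ≤ |E|
  · have hinv : t * (1 / t ^ 2) ≤ t * (1 / t ^ 2 + (lam * t) ^ 2) := by gcongr; nlinarith
    calc deltaT t E ≤ 11 / t := deltaT_le_of_le_abs ht hE
      _ = 11 * (t * (1 / t ^ 2)) := by field_simp
      _ ≤ 11 * (1 + N1 ^ 2) * (t * (1 / t ^ 2 + (lam * t) ^ 2)) :=
          mul_le_mul (by nlinarith) hinv (by positivity) (by positivity)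
  have hlarge : 1 ≤ 8 * (lam * N1) := by
    have := abs_sub_abs_le_abs_sub e E
    rw [abs_sub_comm] at this
    nlinarith [mul_le_mul_of_nonneg_left hNN1 hlam]
  calc deltaT t E ≤ t / (2 * π) := deltaT_le ht.le E
    _ ≤ t * (4 * N1 * (2 * lam)) := by
        rw [div_le_iff₀ (by positivity)]
        nlinarith [Real.pi_gt_three, mul_le_mul_of_nonneg_left hlarge ht.le]
    _ ≤ 11 * (1 + N1 ^ 2) * (t * (1 / t ^ 2 + (lam * t) ^ 2)) := by
        rw [mul_left_comm]
        gcongr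
        · linarith
        · nlinarith [sq_nonneg (N1 - 1)]
        · exact two_mul_le_inv_sq_add_sq ht lam

lemma abs_deltaT_sub_indicator_le {t lam N N1 E e : ℝ} (ht : 0 < t) (hlam : 0 ≤ lam)
    (hN : 0 ≤ N) (hNN1 : N ≤ N1) (he : ∃ n : ℤ, 2 * e = n) (hEe : |E - e| ≤ 2 * (lam * N)) :
    |deltaT t E - t / (2 * π) * (if e = 0 then 1 else 0)|
      ≤ 11 * (1 + N1 ^ 2) * (t * (1 / t ^ 2 + (lam * t) ^ 2)) := by
  rcases eq_or_ne e 0 with rfl | he0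
  · rw [if_pos rfl, mul_one]
    exact abs_deltaT_sub_le_of_abs_le ht hN hNN1 (by rwa [sub_zero] at hEe)
  rw [if_neg he0, mul_zero, sub_zero, abs_of_nonneg (deltaT_nonneg ht.le E)]
  refine deltaT_le_of_half_le_abs ht hlam hN hNN1 ?_ hEe
  obtain ⟨n, hn⟩ := he
  have hn0 : n ≠ 0 := by rintro rfl; exact he0 (by simpa using hn)
  have h1 : (1 : ℝ) ≤ |(n : ℝ)| := by exact_mod_cast Int.one_le_abs hn0
  rw [← hn, abs_mul, abs_two] at h1
  linarith

section Dispersion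

variable {d : ℕ}

lemma chi_eq_zero_or_eq_one (pF : ℝ) (q : Fin d → ℤ) : chi pF q = 0 ∨ chi pF q = 1 := by
  unfold chi; split_ifs <;> simp

lemma abs_chi_le_one (pF : ℝ) (q : Fin d → ℤ) : |chi pF q| ≤ 1 := by
  rcases chi_eq_zero_or_eq_one pF q with h | h <;> simp [h]

lemma abs_chiP_le_one (pF : ℝ) (q : Fin d → ℤ) : |chiP pF q| ≤ 1 := by
  rcases chi_eq_zero_or_eq_one pF q with h | h <;> simp [chiP, h]

lemma abs_conv_le {Vh g : (Fin d → ℤ) → ℝ} (hVh : Summable Vh) (hg : ∀ q, |g q| ≤ 1)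
    (q : Fin d → ℤ) : |conv Vh g q| ≤ VhatL1 Vh := by
  rw [conv, VhatL1, abs_mul, abs_of_pos (by positivity)]
  gcongr
  rw [← Real.norm_eq_abs]
  refine tsum_of_norm_bounded hVh.abs.hasSum fun k => ?_
  rw [Real.norm_eq_abs, abs_mul]
  exact mul_le_of_le_one_right (abs_nonneg _) (hg _)

lemma abs_disp_sub_freeDisp_le {pF lam : ℝ} {Vh : (Fin d → ℤ) → ℝ} (hVh : Summable Vh)
    (hlam : 0 ≤ lam) (q : Fin d → ℤ) :
    |disp pF lam Vh q - freeDisp pF q| ≤ lam / 2 * VhatL1 Vh := by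
  have hconv : ∀ g : (Fin d → ℤ) → ℝ, (∀ q, |g q| ≤ 1) →
      |-(lam / 2 * conv Vh g q)| ≤ lam / 2 * VhatL1 Vh := fun g hg => by
    rw [abs_neg, abs_mul, abs_of_nonneg (by positivity)]
    exact mul_le_mul_of_nonneg_left (abs_conv_le hVh hg q) (by positivity)
  rcases chi_eq_zero_or_eq_one pF q with h | h
  · convert hconv (chi pF) (abs_chi_le_one pF) using 2
    simp only [disp, freeDisp, chiP, h]; ring
  · convert hconv (chiP pF) (abs_chiP_le_one pF) using 2
    simp only [disp, freeDisp, chiP, h]; ring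

lemma two_mul_freeDisp_eq_intCast (pF : ℝ) (q : Fin d → ℤ) :
    ∃ n : ℤ, 2 * freeDisp pF q = n := by
  have hsq : zNorm q ^ 2 = ((∑ i, q i ^ 2 : ℤ) : ℝ) := by
    rw [zNorm, Real.sq_sqrt (by positivity)]; push_cast; rfl
  rcases chi_eq_zero_or_eq_one pF q with h | h
  · exact ⟨∑ i, q i ^ 2, by rw [freeDisp, chiP, h, ← hsq]; ring⟩
  · exact ⟨-∑ i, q i ^ 2, by rw [freeDisp, chiP, h, Int.cast_neg, ← hsq]; ring⟩

lemma VhatL1_nonneg (Vh : (Fin d → ℤ) → ℝ) : 0 ≤ VhatL1 Vh :=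
  mul_nonneg (by positivity) (tsum_nonneg fun _ => abs_nonneg _)

noncomputable def dispGap (pF lam : ℝ) (Vh : (Fin d → ℤ) → ℝ) (p₁ p₂ p₃ p₄ : Fin d → ℤ) :
    ℝ :=
  disp pF lam Vh p₁ + disp pF lam Vh p₂ - disp pF lam Vh p₃ - disp pF lam Vh p₄

noncomputable def freeDispGap (pF : ℝ) (p₁ p₂ p₃ p₄ : Fin d → ℤ) : ℝ :=
  freeDisp pF p₁ + freeDisp pF p₂ - freeDisp pF p₃ - freeDisp pF p₄

lemma abs_dispGap_sub_freeDispGap_le {pF lam : ℝ} {Vh : (Fin d → ℤ) → ℝ}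
    (hVh : Summable Vh) (hlam : 0 ≤ lam) (p₁ p₂ p₃ p₄ : Fin d → ℤ) :
    |dispGap pF lam Vh p₁ p₂ p₃ p₄ - freeDispGap pF p₁ p₂ p₃ p₄| ≤ 2 * (lam * VhatL1 Vh) := by
  have h := fun q => abs_le.mp (abs_disp_sub_freeDisp_le (pF := pF) hVh hlam q)
  obtain ⟨h₁, h₁'⟩ := h p₁
  obtain ⟨h₂, h₂'⟩ := h p₂
  obtain ⟨h₃, h₃'⟩ := h p₃
  obtain ⟨h₄, h₄'⟩ := h p₄
  exact abs_le.mpr ⟨by rw [dispGap, freeDispGap]; linarith, by rw [dispGap, freeDispGap]; linarith⟩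

lemma abs_deltaT_dispGap_sub_indicator_le {pF lam t N1 : ℝ}
    {Vh : (Fin d → ℤ) → ℝ} (hVh : Summable Vh) (ht : 0 < t) (hlam : 0 ≤ lam)
    (hN1 : VhatL1 Vh ≤ N1) (p₁ p₂ p₃ p₄ : Fin d → ℤ) :
    |deltaT t (dispGap pF lam Vh p₁ p₂ p₃ p₄)
      - t / (2 * π) * (if freeDispGap pF p₁ p₂ p₃ p₄ = 0 then 1 else 0)|
      ≤ 11 * (1 + N1 ^ 2) * (t * (1 / t ^ 2 + (lam * t) ^ 2)) := by
  refine abs_deltaT_sub_indicator_le ht hlam (VhatL1_nonneg Vh) hN1 ?_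
    (abs_dispGap_sub_freeDispGap_le hVh hlam p₁ p₂ p₃ p₄)
  obtain ⟨n₁, h₁⟩ := two_mul_freeDisp_eq_intCast pF p₁
  obtain ⟨n₂, h₂⟩ := two_mul_freeDisp_eq_intCast pF p₂
  obtain ⟨n₃, h₃⟩ := two_mul_freeDisp_eq_intCast pF p₃
  obtain ⟨n₄, h₄⟩ := two_mul_freeDisp_eq_intCast pF p₄
  exact ⟨n₁ + n₂ - n₃ - n₄, by rw [freeDispGap]; push_cast; linear_combination h₁ + h₂ - h₃ - h₄⟩

end Dispersion

section Kernel

variable {d : ℕ}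

lemma occupation_mem_Icc (pF : ℝ) (x y z w : Fin d → ℤ) :
    chi pF x * chi pF y * chi pF z * chi pF w + chiP pF x * chiP pF y * chiP pF z * chiP pF w
        ∈ Set.Icc (0 : ℝ) 1 ∧
      chi pF x * chi pF y * chiP pF z * chiP pF w + chiP pF x * chiP pF y * chi pF z * chi pF w
        ∈ Set.Icc (0 : ℝ) 1 := by
  rcases chi_eq_zero_or_eq_one pF x with hx | hx <;>
  rcases chi_eq_zero_or_eq_one pF y with hy | hy <;>
  rcases chi_eq_zero_or_eq_one pF z with hz | hz <;>
  rcases chi_eq_zero_or_eq_one pF w with hw | hw <;>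
  norm_num [chiP, hx, hy, hz, hw]

lemma collisionKernel_nonneg (pF : ℝ) (Vh : (Fin d → ℤ) → ℝ) (p₁ p₂ p₃ p₄ : Fin d → ℤ) :
    0 ≤ collisionKernel pF Vh p₁ p₂ p₃ p₄ := by
  obtain ⟨⟨h₁, -⟩, ⟨h₂, -⟩⟩ := occupation_mem_Icc pF p₁ p₂ p₃ p₄
  obtain ⟨-, ⟨h₂, -⟩⟩ := occupation_mem_Icc pF p₁ p₃ p₂ p₄
  unfold collisionKernel
  refine add_nonneg (mul_nonneg (mul_nonneg ?_ h₁) (sq_nonneg _))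
    (mul_nonneg (mul_nonneg ?_ h₂) (sq_nonneg _)) <;> split_ifs <;> norm_num

lemma collisionKernel_le (pF : ℝ) (Vh : (Fin d → ℤ) → ℝ) (p₁ p₂ p₃ p₄ : Fin d → ℤ) :
    collisionKernel pF Vh p₁ p₂ p₃ p₄
      ≤ (if p₄ = p₂ + (p₁ - p₃) then (Vh (p₃ - p₂) - Vh (p₁ - p₃)) ^ 2 else 0)
        + (if p₄ = p₂ + (p₃ - p₁) then 2 * Vh (p₁ - p₃) ^ 2 else 0) := by
  obtain ⟨⟨h₁, h₁'⟩, -⟩ := occupation_mem_Icc pF p₁ p₂ p₃ p₄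
  obtain ⟨-, ⟨h₂, h₂'⟩⟩ := occupation_mem_Icc pF p₁ p₃ p₂ p₄
  have hsum : p₁ + p₂ = p₃ + p₄ ↔ p₄ = p₂ + (p₁ - p₃) := by
    constructor <;> intro h <;> linear_combination -h
  have hdiff : p₁ - p₂ = p₃ - p₄ ↔ p₄ = p₂ + (p₃ - p₁) := by
    constructor <;> intro h <;> linear_combination h
  unfold collisionKernel
  simp only [hsum, hdiff]
  have hs₁ := sq_nonneg (Vh (p₁ - p₄) - Vh (p₁ - p₃))
  have hs₂ := sq_nonneg (Vh (p₁ - p₃))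
  split_ifs with e₁ e₂ e₂
  · rw [show p₁ - p₄ = p₃ - p₂ by rw [e₁]; abel] at hs₁ ⊢
    nlinarith
  · rw [show p₁ - p₄ = p₃ - p₂ by rw [e₁]; abel] at hs₁ ⊢
    nlinarith
  · nlinarith
  · nlinarith

end Kernel

def gainLoss {X : Type*} (f : X → ℝ) (p₁ p₂ p₃ p₄ : X) : ℝ :=
  f p₃ * f p₄ * (1 - f p₁) * (1 - f p₂) - f p₁ * f p₂ * (1 - f p₃) * (1 - f p₄)

section GainLoss

variable {X : Type*} {f : X → ℝ} {A B : ℝ}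

lemma abs_gainLoss_le_left (hA : ∀ q, |1 - f q| ≤ A) (hB : ∀ q, |f q| ≤ B) (p₁ p₂ p₃ p₄ : X) :
    |gainLoss f p₁ p₂ p₃ p₄| ≤ A ^ 2 * B * (|f p₃| + |f p₂|) := by
  have hA0 : 0 ≤ A := (abs_nonneg _).trans (hA p₁)
  have hB0 : 0 ≤ B := (abs_nonneg _).trans (hB p₁)
  calc |gainLoss f p₁ p₂ p₃ p₄|
      ≤ |f p₃| * |f p₄| * |1 - f p₁| * |1 - f p₂| + |f p₁| * |f p₂| * |1 - f p₃| * |1 - f p₄| :=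
        (abs_sub _ _).trans_eq (by simp only [abs_mul])
    _ ≤ |f p₃| * B * A * A + B * |f p₂| * A * A := by gcongr <;> apply_assumption
    _ = A ^ 2 * B * (|f p₃| + |f p₂|) := by ring

lemma abs_gainLoss_le_right (hA : ∀ q, |1 - f q| ≤ A) (hB : ∀ q, |f q| ≤ B) (p₁ p₂ p₃ p₄ : X) :
    |gainLoss f p₁ p₂ p₃ p₄| ≤ A ^ 2 * B * (|f p₄| + |f p₂|) := by
  have hA0 : 0 ≤ A := (abs_nonneg _).trans (hA p₁)
  have hB0 : 0 ≤ B := (abs_nonneg _).trans (hB p₁)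
  calc |gainLoss f p₁ p₂ p₃ p₄|
      ≤ |f p₃| * |f p₄| * |1 - f p₁| * |1 - f p₂| + |f p₁| * |f p₂| * |1 - f p₃| * |1 - f p₄| :=
        (abs_sub _ _).trans_eq (by simp only [abs_mul])
    _ ≤ B * |f p₄| * A * A + B * |f p₂| * A * A := by gcongr <;> apply_assumption
    _ = A ^ 2 * B * (|f p₄| + |f p₂|) := by ring

end GainLoss

section Majorant

variable {d : ℕ} (Vh f : (Fin d → ℤ) → ℝ) (p : Fin d → ℤ)

/- Majorants for the two channels of `σ` after `p₄` is eliminated by momentum conservation. In each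
term the arguments of `V̂` and of `f` are independent coordinates on `(p₂, p₃)`, so that every term
sums to `‖V̂‖₂² ‖f‖₁`. -/
def sumChannelBound (p₂ p₃ : Fin d → ℤ) : ℝ :=
  2 * (Vh (p₃ - p₂) ^ 2 * |f p₃|) + 2 * (Vh (p₃ - p₂) ^ 2 * |f p₂|)
    + 2 * (Vh (p - p₃) ^ 2 * |f (p₂ + (p - p₃))|) + 2 * (Vh (p - p₃) ^ 2 * |f p₂|)

def diffChannelBound (p₂ p₃ : Fin d → ℤ) : ℝ :=
  2 * (Vh (p - p₃) ^ 2 * |f (p₂ + (p₃ - p))|) + 2 * (Vh (p - p₃) ^ 2 * |f p₂|)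

def collisionMajorant (A B : ℝ) (p₂ p₃ p₄ : Fin d → ℤ) : ℝ :=
  A ^ 2 * B * ((if p₄ = p₂ + (p - p₃) then sumChannelBound Vh f p p₂ p₃ else 0)
    + (if p₄ = p₂ + (p₃ - p) then diffChannelBound Vh f p p₂ p₃ else 0))

variable {Vh f}

lemma hasSum_sumChannelBound (hV : Summable fun k => Vh k ^ 2) (hf : Summable fun q => |f q|) :
    HasSum (fun q : (Fin d → ℤ) × (Fin d → ℤ) => sumChannelBound Vh f p q.1 q.2)
      (8 * ((∑' k, Vh k ^ 2) * ∑' q, |f q|)) := by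
  have hV0 : 0 ≤ fun k => Vh k ^ 2 := fun _ => sq_nonneg _
  have hf0 : 0 ≤ fun q => |f q| := fun _ => abs_nonneg _
  have h₁ := hasSum_mul_comp_equiv hV hf hV0 hf0
    (((Equiv.prodComm _ _).trans (Equiv.prodShear (Equiv.refl _) Equiv.subLeft)).trans
      (Equiv.prodComm _ _))
  have h₂ := hasSum_mul_comp_equiv hV hf hV0 hf0
    ((Equiv.prodShear (Equiv.refl _) Equiv.subRight).trans (Equiv.prodComm _ _))
  have h₃ := hasSum_mul_comp_equiv hV hf hV0 hf0
    ((Equiv.prodComm _ _).trans (Equiv.prodShear (Equiv.subLeft p) fun x => Equiv.addRight (p - x)))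
  have h₄ := hasSum_mul_comp_equiv hV hf hV0 hf0
    ((Equiv.prodComm _ _).trans (Equiv.prodShear (Equiv.subLeft p) fun _ => Equiv.refl _))
  rw [show (8 : ℝ) = 2 + 2 + 2 + 2 by norm_num, add_mul, add_mul, add_mul]
  exact (((h₁.mul_left 2).add (h₂.mul_left 2)).add (h₃.mul_left 2)).add (h₄.mul_left 2)

lemma hasSum_diffChannelBound (hV : Summable fun k => Vh k ^ 2) (hf : Summable fun q => |f q|) :
    HasSum (fun q : (Fin d → ℤ) × (Fin d → ℤ) => diffChannelBound Vh f p q.1 q.2)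
      (4 * ((∑' k, Vh k ^ 2) * ∑' q, |f q|)) := by
  have hV0 : 0 ≤ fun k => Vh k ^ 2 := fun _ => sq_nonneg _
  have hf0 : 0 ≤ fun q => |f q| := fun _ => abs_nonneg _
  have h₁ := hasSum_mul_comp_equiv hV hf hV0 hf0
    ((Equiv.prodComm _ _).trans (Equiv.prodShear (Equiv.subLeft p) fun x => Equiv.addRight (x - p)))
  have h₂ := hasSum_mul_comp_equiv hV hf hV0 hf0
    ((Equiv.prodComm _ _).trans (Equiv.prodShear (Equiv.subLeft p) fun _ => Equiv.refl _))
  rw [show (4 : ℝ) = 2 + 2 by norm_num, add_mul]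
  exact (h₁.mul_left 2).add (h₂.mul_left 2)

lemma hasSum_collisionMajorant (hV : Summable fun k => Vh k ^ 2)
    (hf : Summable fun q => |f q|) (A B : ℝ) :
    HasSum (fun q : ((Fin d → ℤ) × (Fin d → ℤ)) × (Fin d → ℤ) =>
        collisionMajorant Vh f p A B q.1.1 q.1.2 q.2)
      (12 * A ^ 2 * B * ((∑' k, Vh k ^ 2) * ∑' q, |f q|)) := by
  have hsum := hasSum_ite_eq_graph (fun q => q.1 + (p - q.2)) (hasSum_sumChannelBound p hV hf)
  have hdiff := hasSum_ite_eq_graph (fun q => q.1 + (q.2 - p)) (hasSum_diffChannelBound p hV hf)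
  rw [show 12 * A ^ 2 * B * ((∑' k, Vh k ^ 2) * ∑' q, |f q|)
      = A ^ 2 * B * (8 * ((∑' k, Vh k ^ 2) * ∑' q, |f q|) + 4 * ((∑' k, Vh k ^ 2) * ∑' q, |f q|))
      by ring]
  exact (hsum.add hdiff).mul_left _

variable {A B : ℝ} (hA : ∀ q, |1 - f q| ≤ A) (hB : ∀ q, |f q| ≤ B)
include hA hB

lemma collisionKernel_mul_abs_gainLoss_le (pF : ℝ) (p₂ p₃ p₄ : Fin d → ℤ) :
    collisionKernel pF Vh p p₂ p₃ p₄ * |gainLoss f p p₂ p₃ p₄|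
      ≤ collisionMajorant Vh f p A B p₂ p₃ p₄ := by
  have hsum : p₄ = p₂ + (p - p₃) → (Vh (p₃ - p₂) - Vh (p - p₃)) ^ 2 * |gainLoss f p p₂ p₃ p₄|
      ≤ A ^ 2 * B * sumChannelBound Vh f p p₂ p₃ := by
    rintro rfl
    have hl := abs_gainLoss_le_left hA hB p p₂ p₃ (p₂ + (p - p₃))
    have hr := abs_gainLoss_le_right hA hB p p₂ p₃ (p₂ + (p - p₃))
    calc (Vh (p₃ - p₂) - Vh (p - p₃)) ^ 2 * |gainLoss f p p₂ p₃ (p₂ + (p - p₃))|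
        ≤ 2 * Vh (p₃ - p₂) ^ 2 * |gainLoss f p p₂ p₃ (p₂ + (p - p₃))|
          + 2 * Vh (p - p₃) ^ 2 * |gainLoss f p p₂ p₃ (p₂ + (p - p₃))| := by
          nlinarith [mul_nonneg (sq_nonneg (Vh (p₃ - p₂) + Vh (p - p₃)))
            (abs_nonneg (gainLoss f p p₂ p₃ (p₂ + (p - p₃))))]
      _ ≤ 2 * Vh (p₃ - p₂) ^ 2 * (A ^ 2 * B * (|f p₃| + |f p₂|))
          + 2 * Vh (p - p₃) ^ 2 * (A ^ 2 * B * (|f (p₂ + (p - p₃))| + |f p₂|)) := by gcongr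
      _ = A ^ 2 * B * sumChannelBound Vh f p p₂ p₃ := by rw [sumChannelBound]; ring
  have hdiff : p₄ = p₂ + (p₃ - p) → 2 * Vh (p - p₃) ^ 2 * |gainLoss f p p₂ p₃ p₄|
      ≤ A ^ 2 * B * diffChannelBound Vh f p p₂ p₃ := by
    rintro rfl
    calc 2 * Vh (p - p₃) ^ 2 * |gainLoss f p p₂ p₃ (p₂ + (p₃ - p))|
        ≤ 2 * Vh (p - p₃) ^ 2 * (A ^ 2 * B * (|f (p₂ + (p₃ - p))| + |f p₂|)) := by
          gcongr; exact abs_gainLoss_le_right hA hB p p₂ p₃ _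
      _ = A ^ 2 * B * diffChannelBound Vh f p p₂ p₃ := by rw [diffChannelBound]; ring
  refine (mul_le_mul_of_nonneg_right (collisionKernel_le pF Vh p p₂ p₃ p₄)
    (abs_nonneg _)).trans ?_
  rw [collisionMajorant, add_mul, mul_add]
  refine add_le_add ?_ ?_ <;> split_ifs with h
  · exact hsum h
  · simp
  · exact hdiff h
  · simp

lemma norm_collisionKernel_mul_mul_gainLoss_le (pF : ℝ) {w c : ℝ} (hw : |w| ≤ c)
    (p₂ p₃ p₄ : Fin d → ℤ) :
    ‖collisionKernel pF Vh p p₂ p₃ p₄ * w * gainLoss f p p₂ p₃ p₄‖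
      ≤ c * collisionMajorant Vh f p A B p₂ p₃ p₄ := by
  have hκ := collisionKernel_nonneg pF Vh p p₂ p₃ p₄
  rw [Real.norm_eq_abs, abs_mul, abs_mul, abs_of_nonneg hκ]
  calc collisionKernel pF Vh p p₂ p₃ p₄ * |w| * |gainLoss f p p₂ p₃ p₄|
      ≤ collisionKernel pF Vh p p₂ p₃ p₄ * c * |gainLoss f p p₂ p₃ p₄| := by gcongr
    _ = c * (collisionKernel pF Vh p p₂ p₃ p₄ * |gainLoss f p p₂ p₃ p₄|) := by ring
    _ ≤ c * collisionMajorant Vh f p A B p₂ p₃ p₄ :=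
        mul_le_mul_of_nonneg_left (collisionKernel_mul_abs_gainLoss_le p hA hB pF p₂ p₃ p₄)
          ((abs_nonneg w).trans hw)

variable (hV : Summable fun k => Vh k ^ 2) (hf : Summable fun q => |f q|)
include hV hf

lemma summable_collisionKernel_mul_mul_gainLoss (pF : ℝ)
    {w : (Fin d → ℤ) → (Fin d → ℤ) → (Fin d → ℤ) → ℝ} {c : ℝ}
    (hw : ∀ p₂ p₃ p₄, |w p₂ p₃ p₄| ≤ c) :
    Summable fun q : ((Fin d → ℤ) × (Fin d → ℤ)) × (Fin d → ℤ) =>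
      collisionKernel pF Vh p q.1.1 q.1.2 q.2 * w q.1.1 q.1.2 q.2
        * gainLoss f p q.1.1 q.1.2 q.2 :=
  ((hasSum_collisionMajorant p hV hf A B).summable.mul_left c).of_norm_bounded fun _ =>
    norm_collisionKernel_mul_mul_gainLoss_le p hA hB pF (hw _ _ _) _ _ _

lemma abs_tsum_collisionKernel_mul_mul_gainLoss_le (pF : ℝ)
    {w : (Fin d → ℤ) → (Fin d → ℤ) → (Fin d → ℤ) → ℝ} {c : ℝ}
    (hw : ∀ p₂ p₃ p₄, |w p₂ p₃ p₄| ≤ c) :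
    |∑' q : ((Fin d → ℤ) × (Fin d → ℤ)) × (Fin d → ℤ),
        collisionKernel pF Vh p q.1.1 q.1.2 q.2 * w q.1.1 q.1.2 q.2
          * gainLoss f p q.1.1 q.1.2 q.2|
      ≤ c * (12 * A ^ 2 * B * ((∑' k, Vh k ^ 2) * ∑' q, |f q|)) := by
  rw [← Real.norm_eq_abs]
  exact tsum_of_norm_bounded ((hasSum_collisionMajorant p hV hf A B).mul_left c) fun _ =>
    norm_collisionKernel_mul_mul_gainLoss_le p hA hB pF (hw _ _ _) _ _ _

end Majorant

section Collision

variable {d : ℕ} {pF lam t : ℝ} {Vh f : (Fin d → ℤ) → ℝ} (p : Fin d → ℤ) {A B : ℝ}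
  (hA : ∀ q, |1 - f q| ≤ A) (hB : ∀ q, |f q| ≤ B)
  (hV : Summable fun k => Vh k ^ 2) (hf : Summable fun q => |f q|)
include hA hB hV hf

lemma tsum_collision_eq_tsum_prod {w : (Fin d → ℤ) → (Fin d → ℤ) → (Fin d → ℤ) → ℝ} {c : ℝ}
    (hw : ∀ p₂ p₃ p₄, |w p₂ p₃ p₄| ≤ c) :
    ∑' (p₂ : Fin d → ℤ) (p₃ : Fin d → ℤ) (p₄ : Fin d → ℤ),
        collisionKernel pF Vh p p₂ p₃ p₄ * w p₂ p₃ p₄ * gainLoss f p p₂ p₃ p₄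
      = ∑' q : ((Fin d → ℤ) × (Fin d → ℤ)) × (Fin d → ℤ),
          collisionKernel pF Vh p q.1.1 q.1.2 q.2 * w q.1.1 q.1.2 q.2
            * gainLoss f p q.1.1 q.1.2 q.2 :=
  tsum_tsum_tsum_eq_tsum_prod (summable_collisionKernel_mul_mul_gainLoss p hA hB hV hf pF hw)

lemma Qt_sub_mul_Qlim_eq (ht : 0 ≤ t) :
    Qt pF lam t Vh f p - t * Qlim pF Vh f p
      = 4 * π * ((2 * π) ^ (3 * d))⁻¹ * ∑' q : ((Fin d → ℤ) × (Fin d → ℤ)) × (Fin d → ℤ),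
          collisionKernel pF Vh p q.1.1 q.1.2 q.2
            * (deltaT t (dispGap pF lam Vh p q.1.1 q.1.2 q.2)
              - t / (2 * π) * (if freeDispGap pF p q.1.1 q.1.2 q.2 = 0 then 1 else 0))
            * gainLoss f p q.1.1 q.1.2 q.2 := by
  have hδ (p₂ p₃ p₄ : Fin d → ℤ) : |deltaT t (dispGap pF lam Vh p p₂ p₃ p₄)| ≤ t / (2 * π) := by
    rw [abs_of_nonneg (deltaT_nonneg ht _)]; exact deltaT_le ht _
  have hind (p₂ p₃ p₄ : Fin d → ℤ) :
      |t / (2 * π) * (if freeDispGap pF p p₂ p₃ p₄ = 0 then 1 else 0)| ≤ t / (2 * π) := by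
    rw [abs_mul, abs_of_nonneg (by positivity)]
    exact mul_le_of_le_one_right (by positivity) (by split_ifs <;> norm_num)
  have hQt : Qt pF lam t Vh f p = 4 * π * ((2 * π) ^ (3 * d))⁻¹ *
      ∑' (p₂ : Fin d → ℤ) (p₃ : Fin d → ℤ) (p₄ : Fin d → ℤ), collisionKernel pF Vh p p₂ p₃ p₄
        * deltaT t (dispGap pF lam Vh p p₂ p₃ p₄) * gainLoss f p p₂ p₃ p₄ := rfl
  have hQlim : t * Qlim pF Vh f p = 4 * π * ((2 * π) ^ (3 * d))⁻¹ *
      ∑' (p₂ : Fin d → ℤ) (p₃ : Fin d → ℤ) (p₄ : Fin d → ℤ), collisionKernel pF Vh p p₂ p₃ p₄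
        * (t / (2 * π) * (if freeDispGap pF p p₂ p₃ p₄ = 0 then 1 else 0))
        * gainLoss f p p₂ p₃ p₄ := by
    simp only [Qlim, mul_left_comm t, ← tsum_mul_left]
    exact tsum_congr fun p₂ => tsum_congr fun p₃ => tsum_congr fun p₄ => by
      rw [gainLoss, freeDispGap]; ring
  have hsum₁ := summable_collisionKernel_mul_mul_gainLoss p hA hB hV hf pF hδ
  have hsum₂ := summable_collisionKernel_mul_mul_gainLoss p hA hB hV hf pF hind
  rw [hQt, hQlim, tsum_collision_eq_tsum_prod p hA hB hV hf hδ,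
    tsum_collision_eq_tsum_prod p hA hB hV hf hind, ← mul_sub, ← hsum₁.tsum_sub hsum₂]
  exact congrArg _ (tsum_congr fun q => by ring)

lemma abs_Qt_sub_mul_Qlim_le {N1 : ℝ} (ht : 0 < t) (hlam : 0 ≤ lam) (hVh : Summable Vh)
    (hN1 : VhatL1 Vh ≤ N1) :
    |Qt pF lam t Vh f p - t * Qlim pF Vh f p|
      ≤ 528 * π * (1 + N1 ^ 2) ^ 2 * t * (1 / t ^ 2 + (lam * t) ^ 2) * A ^ 2
        * (((2 * π) ^ d)⁻¹ * ∑' q, |f q|) * B := by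
  have hV2N1 : ∑' k, Vh k ^ 2 ≤ ((2 * π) ^ d * N1) ^ 2 := by
    refine (tsum_sq_le_sq_tsum_abs hVh).trans
      (pow_le_pow_left₀ (tsum_nonneg fun _ => abs_nonneg _) ?_ 2)
    rwa [VhatL1, inv_mul_le_iff₀ (by positivity)] at hN1
  have hB0 : 0 ≤ B := (abs_nonneg _).trans (hB p)
  have hS0 : 0 ≤ ∑' q, |f q| := tsum_nonneg fun _ => abs_nonneg _
  rw [Qt_sub_mul_Qlim_eq p hA hB hV hf ht.le, abs_mul, abs_of_pos (by positivity)]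
  calc 4 * π * ((2 * π) ^ (3 * d))⁻¹ * |∑' q : ((Fin d → ℤ) × (Fin d → ℤ)) × (Fin d → ℤ), _|
      ≤ 4 * π * ((2 * π) ^ (3 * d))⁻¹ * (11 * (1 + N1 ^ 2) * (t * (1 / t ^ 2 + (lam * t) ^ 2))
          * (12 * A ^ 2 * B * ((∑' k, Vh k ^ 2) * ∑' q, |f q|))) := by
        gcongr
        exact abs_tsum_collisionKernel_mul_mul_gainLoss_le p hA hB hV hf pF
          (abs_deltaT_dispGap_sub_indicator_le hVh ht hlam hN1 p)
    _ ≤ 4 * π * ((2 * π) ^ (3 * d))⁻¹ * (11 * (1 + N1 ^ 2) * (t * (1 / t ^ 2 + (lam * t) ^ 2))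
          * (12 * A ^ 2 * B * (((2 * π) ^ d * N1) ^ 2 * ∑' q, |f q|))) := by
        gcongr
    _ = 528 * π * (1 + N1 ^ 2) * N1 ^ 2 * t * (1 / t ^ 2 + (lam * t) ^ 2) * A ^ 2
          * (((2 * π) ^ d)⁻¹ * ∑' q, |f q|) * B := by
        rw [pow_mul']
        field_simp
        ring
    _ ≤ 528 * π * (1 + N1 ^ 2) * (1 + N1 ^ 2) * t * (1 / t ^ 2 + (lam * t) ^ 2) * A ^ 2
          * (((2 * π) ^ d)⁻¹ * ∑' q, |f q|) * B := by
        gcongr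
        linarith
    _ = _ := by ring

end Collision

theorem stmt11_general (d : ℕ) (N1 : ℝ) :
    ∃ C : ℝ, 0 < C ∧
      ∀ r : ℝ, 0 < r → ∀ Vh : (Fin d → ℤ) → ℝ,
        (∀ k, r < zNorm k → Vh k = 0) → (∀ k, Vh (-k) = Vh k) → Vh 0 = 0 →
        VhatL1 Vh ≤ N1 →
        ∀ pF : ℝ, 0 < pF →
        ∀ lam : ℝ, 0 < lam → lam * VhatL1 Vh ≤ 1 / 2 →
        ∀ f : (Fin d → ℤ) → ℝ, Summable f →
        ∀ t : ℝ, 0 < t →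
        ∀ p : Fin d → ℤ,
          |Qt pF lam t Vh f p - t * Qlim pF Vh f p|
            ≤ C * t * (1 / t ^ 2 + (lam * t) ^ 2) * (⨆ q, |1 - f q|) ^ 2 *
              (((2 * π) ^ d)⁻¹ * ∑' q : Fin d → ℤ, |f q|) * (⨆ q, |f q|) := by
  refine ⟨528 * π * (1 + N1 ^ 2) ^ 2, by positivity, ?_⟩
  intro r _ Vh hsupp _ _ hN1 pF _ lam hlam _ f hf t ht p
  have hV2 : Summable fun k => Vh k ^ 2 :=
    summable_of_eq_zero_of_lt_zNorm fun k hk => by rw [hsupp k hk]; ring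
  exact abs_Qt_sub_mul_Qlim_le p hf.abs_one_sub_le_iSup hf.abs_le_iSup_abs hV2 hf.abs ht hlam.le
    (summable_of_eq_zero_of_lt_zNorm hsupp) hN1

/-- Comparison of `Q_t` and `t·𝒬`: there is `C > 0`, depending only on `d` and an upper
bound `N₁` for `‖V̂‖₁`, such that for every admissible `V̂`, any `p_F > 0`, any `λ > 0`
with `λ·‖V̂‖₁ ≤ 1/2`, any summable `f` and any `t > 0`,
`sup_p |Q_t[f](p) − t·𝒬[f](p)|
  ≤ C·t·(1/t² + (λt)²)·(sup|1−f|)²·((2π)^{−d}·∑|f|)·(sup|f|)`. -/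
theorem stmt11 (d : ℕ) (hd : 1 ≤ d) (N1 : ℝ) :
    ∃ C : ℝ, 0 < C ∧
      ∀ r : ℝ, 0 < r → ∀ Vh : (Fin d → ℤ) → ℝ,
        (∀ k, r < zNorm k → Vh k = 0) → (∀ k, Vh (-k) = Vh k) → Vh 0 = 0 →
        VhatL1 Vh ≤ N1 →
        ∀ pF : ℝ, 0 < pF →
        ∀ lam : ℝ, 0 < lam → lam * VhatL1 Vh ≤ 1 / 2 →
        ∀ f : (Fin d → ℤ) → ℝ, Summable f →
        ∀ t : ℝ, 0 < t →
        ∀ p : Fin d → ℤ,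
          |Qt pF lam t Vh f p - t * Qlim pF Vh f p|
            ≤ C * t * (1 / t ^ 2 + (lam * t) ^ 2) * (⨆ q, |1 - f q|) ^ 2 *
              (((2 * π) ^ d)⁻¹ * ∑' q : Fin d → ℤ, |f q|) * (⨆ q, |f q|) :=
  stmt11_general d N1
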